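/- arXiv:2502.07638 — 2 statements merged into one kernel-verified Lean document; each statement's English description precedes it below -/
import Mathlib

section
/- Let H be a real Hilbert space, a : H × H → ℝ a symmetric, continuous bilinear form that is coercive with constant α > 0, X_δ ⊆ H a closed subspace, u ∈ H, and u_δ ∈ X_δ satisfying the Galerkin orthogonality a(u - u_δ, v) = 0 for all v ∈ X_δ. If Π denotes the H-orthogonal projection onto X_δ and a(v,w) = ⟨v,w⟩_H + b(v,w) for a bilinear form b with |b(v,w)| ≤ M ‖v‖₀ ‖w‖₀ for an auxiliary seminorm ‖·‖₀, then α ‖u_δ - Πu‖_H² ≤ M ‖u - Πu‖₀ ‖u_δ - Πu‖₀. -/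
open RealInnerProductSpace

/-- Abstract form of Inequality (30ab): on a real Hilbert space `H`, let `a` be a
symmetric, continuous, coercive (constant `α > 0`) bilinear form, `Xδ` a closed
subspace with orthogonal projection `Π`, `uδ ∈ Xδ` with Galerkin orthogonality
`a (u - uδ) v = 0` for all `v ∈ Xδ`. If `a v w = ⟨v,w⟩_H + b v w` where
`|b v w| ≤ M ‖v‖₀ ‖w‖₀` for an auxiliary seminorm `‖·‖₀`, then
`α ‖uδ - Π u‖² ≤ M ‖u - Π u‖₀ ‖uδ - Π u‖₀`. -/
theorem stmt6 {H : Type*} [NormedAddCommGroup H] [InnerProductSpace ℝ H] [CompleteSpace H]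
    (a : LinearMap.BilinForm ℝ H)
    (hsymm : ∀ v w : H, a v w = a w v)
    (β : ℝ) (hcont : ∀ v w : H, |a v w| ≤ β * ‖v‖ * ‖w‖)
    (α : ℝ) (hα : 0 < α) (hcoer : ∀ v : H, α * ‖v‖ ^ 2 ≤ a v v)
    (Xδ : Submodule ℝ H) [Submodule.HasOrthogonalProjection Xδ]
    (u uδ : H) (huδ : uδ ∈ Xδ)
    (hGal : ∀ v ∈ Xδ, a (u - uδ) v = 0)
    (b : H → H → ℝ) (M : ℝ) (hM : 0 ≤ M)
    (n : H → ℝ) (hn : ∀ x : H, 0 ≤ n x)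
    (hab : ∀ v w : H, a v w = ⟪v, w⟫ + b v w)
    (hb : ∀ v w : H, |b v w| ≤ M * n v * n w) :
    α * ‖uδ - (Submodule.orthogonalProjectionOnto Xδ u : H)‖ ^ 2 ≤
      M * n (u - (Submodule.orthogonalProjectionOnto Xδ u : H)) * n (uδ - (Submodule.orthogonalProjectionOnto Xδ u : H)) := by
  set p : H := (Submodule.orthogonalProjectionOnto Xδ u : H) with hp
  have hpm : p ∈ Xδ := (Submodule.orthogonalProjectionOnto Xδ u).2
  have he : uδ - p ∈ Xδ := Xδ.sub_mem huδ hpm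
  have h1 : a (uδ - p) (uδ - p) = a (u - p) (uδ - p) := by
    have h0 := hGal (uδ - p) he
    have : a ((u - uδ) + (uδ - p)) (uδ - p) = a (uδ - p) (uδ - p) := by
      rw [map_add, LinearMap.add_apply, h0, zero_add]
    simpa [sub_add_sub_cancel] using this.symm
  have hinner : ⟪u - p, uδ - p⟫ = 0 :=
    Submodule.starProjection_inner_eq_zero u (uδ - p) he
  have h2 : a (u - p) (uδ - p) = b (u - p) (uδ - p) := by
    rw [hab, hinner, zero_add]
  calc α * ‖uδ - p‖ ^ 2 ≤ a (uδ - p) (uδ - p) := hcoer _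
    _ = b (u - p) (uδ - p) := by rw [h1, h2]
    _ ≤ |b (u - p) (uδ - p)| := le_abs_self _
    _ ≤ M * n (u - p) * n (uδ - p) := hb _ _
end

section
/- Let H be a Hilbert space, V a bounded symmetric bilinear form on H with V(z,w) = ⟨z,w⟩_a for a coercive continuous symmetric a, X_δ a closed subspace with projections as in the Galerkin setting, and suppose for the dual solution ϑ (defined by a(v,ϑ) = ⟨e, v⟩_{L²} for all v, where e := u_δ - Πu) one has the regularity bound ‖ϑ‖₂ ≤ C‖e‖_{L²}. If additionally a(u - u_δ, v_δ) = 0 for all v_δ ∈ X_δ and Π is ⟨·,·⟩_X-orthogonal, then ‖e‖²_{L²} = a(ϑ - Πϑ, e) + a(Πϑ, u - Πu). -/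
open RealInnerProductSpace

/-- Duality identity from the proof of Lemma 2.3: with a symmetric coercive continuous
bilinear form `a` on the Hilbert space `H`, L²-pairing `m`, closed subspace `Xδ` with
`X`-orthogonal projection `Π`, dual solution `ϑ` satisfying `a v ϑ = m e v` for all `v`
(where `e := uδ - Π u`), regularity bound `‖ϑ‖₂ ≤ C √(m e e)`, and Galerkin
orthogonality `a (u - uδ) v = 0` on `Xδ`, one has
`m e e = a (ϑ - Π ϑ) e + a (Π ϑ) (u - Π u)`. -/
theorem stmt15 {H : Type*} [NormedAddCommGroup H] [InnerProductSpace ℝ H] [CompleteSpace H]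
    (a m : LinearMap.BilinForm ℝ H)
    (hasymm : ∀ v w : H, a v w = a w v)
    (β : ℝ) (hcont : ∀ v w : H, |a v w| ≤ β * ‖v‖ * ‖w‖)
    (α : ℝ) (hα : 0 < α) (hcoer : ∀ v : H, α * ‖v‖ ^ 2 ≤ a v v)
    (Xδ : Submodule ℝ H) [Submodule.HasOrthogonalProjection Xδ]
    (u uδ : H) (huδ : uδ ∈ Xδ)
    (hGal : ∀ v ∈ Xδ, a (u - uδ) v = 0)
    (ϑ : H)
    (hadj : ∀ v : H, a v ϑ = m (uδ - (Submodule.orthogonalProjectionOnto Xδ u : H)) v)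
    (n2 : H → ℝ) (C : ℝ)
    (hreg : n2 ϑ ≤ C * Real.sqrt (m (uδ - (Submodule.orthogonalProjectionOnto Xδ u : H))
      (uδ - (Submodule.orthogonalProjectionOnto Xδ u : H)))) :
    m (uδ - (Submodule.orthogonalProjectionOnto Xδ u : H)) (uδ - (Submodule.orthogonalProjectionOnto Xδ u : H)) =
      a (ϑ - (Submodule.orthogonalProjectionOnto Xδ ϑ : H)) (uδ - (Submodule.orthogonalProjectionOnto Xδ u : H)) +
      a (Submodule.orthogonalProjectionOnto Xδ ϑ : H) (u - (Submodule.orthogonalProjectionOnto Xδ u : H)) := by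
  set e : H := uδ - (Submodule.orthogonalProjectionOnto Xδ u : H) with he
  have h1 : m e e = a e ϑ := (hadj e).symm
  have hgal : a (Submodule.orthogonalProjectionOnto Xδ ϑ : H) (u - uδ) = 0 := by
    rw [← hasymm]
    exact hGal _ (Submodule.orthogonalProjectionOnto Xδ ϑ).2
  have hsplit : u - (Submodule.orthogonalProjectionOnto Xδ u : H) = (u - uδ) + e := by
    rw [he]; abel
  rw [h1, hasymm e ϑ]
  rw [hsplit, map_add, hgal, zero_add, ← sub_add_cancel ϑ (Submodule.orthogonalProjectionOnto Xδ ϑ : H)]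
  simp [LinearMap.add_apply, map_add]
end
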